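/- For a positive real number k and n ≥ 1, ∑_{s=1}^{n} HF_{k,2s−1} = (1/k)·(HF_{k,2n} − HF_{k,0}) and ∑_{s=1}^{n} HF_{k,2s} = (1/k)·(HF_{k,2n+1} − HF_{k,1}). -/

import Mathlib

noncomputable def kFib (k : ℝ) : ℕ → ℝ
  | 0 => 0
  | 1 => 1
  | (n + 2) => k * kFib k (n + 1) + kFib k n

noncomputable def kLucas (k : ℝ) : ℕ → ℝ
  | 0 => 2
  | 1 => k
  | (n + 2) => k * kLucas k (n + 1) + kLucas k n

noncomputable def HF (k : ℝ) (n : ℕ) : Fin 4 → ℝ :=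
  ![kFib k n, kFib k (n + 1), kFib k (n + 2), kFib k (n + 3)]

noncomputable def HL (k : ℝ) (n : ℕ) : Fin 4 → ℝ :=
  ![kLucas k n, kLucas k (n + 1), kLucas k (n + 2), kLucas k (n + 3)]

def hconj (a : Fin 4 → ℝ) : Fin 4 → ℝ := ![a 0, -a 1, -a 2, -a 3]

def hmul (a b : Fin 4 → ℝ) : Fin 4 → ℝ :=
  ![a 0 * b 0 + a 1 * b 1 + a 2 * b 2 + a 3 * b 3,
    a 0 * b 1 + a 1 * b 0 + a 2 * b 3 - a 3 * b 2,
    a 0 * b 2 + a 2 * b 0 - a 1 * b 3 + a 3 * b 1,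
    a 0 * b 3 + a 3 * b 0 + a 1 * b 2 - a 2 * b 1]

/-! The recurrence gives `k • HF k (m + 1) = HF k (m + 2) - HF k m`, so both the sum of the
odd-indexed and the sum of the even-indexed terms telescope. -/

open Finset

section Recurrence

variable {M : Type*} [AddCommGroup M]

theorem sum_range_smul_two_mul_add_one {R : Type*} [Semiring R] [Module R M] {c : R} {f : ℕ → M}
    (hf : ∀ n, f (n + 2) = c • f (n + 1) + f n) (m n : ℕ) :
    ∑ i ∈ range n, c • f (m + 2 * i + 1) = f (m + 2 * n) - f m := by
  have hstep (i : ℕ) : c • f (m + 2 * i + 1) = f (m + 2 * (i + 1)) - f (m + 2 * i) := by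
    rw [show m + 2 * (i + 1) = m + 2 * i + 2 by ring, hf, add_sub_cancel_right]
  simp_rw [hstep]
  exact sum_range_sub (fun i ↦ f (m + 2 * i)) n

theorem sum_range_two_mul_add_one {K : Type*} [DivisionRing K] [Module K M] {c : K} (hc : c ≠ 0)
    {f : ℕ → M} (hf : ∀ n, f (n + 2) = c • f (n + 1) + f n) (m n : ℕ) :
    ∑ i ∈ range n, f (m + 2 * i + 1) = c⁻¹ • (f (m + 2 * n) - f m) := by
  rw [eq_inv_smul_iff₀ hc, smul_sum, sum_range_smul_two_mul_add_one hf]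

end Recurrence

theorem kFib_add_two (k : ℝ) (n : ℕ) : kFib k (n + 2) = k * kFib k (n + 1) + kFib k n := rfl

theorem HF_add_two (k : ℝ) (n : ℕ) : HF k (n + 2) = k • HF k (n + 1) + HF k n := by
  ext i
  fin_cases i <;> simp [HF, kFib_add_two]

theorem sum_Icc_one_eq_sum_range {M : Type*} [AddCommMonoid M] (f : ℕ → M) (n : ℕ) :
    ∑ s ∈ Icc 1 n, f s = ∑ i ∈ range n, f (i + 1) := by
  rw [← Ico_add_one_right_eq_Icc, sum_Ico_eq_sum_range, Nat.add_sub_cancel]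
  simp_rw [add_comm 1]

theorem sum_HF_odd_even_general (k : ℝ) (hk : 0 < k) (n : ℕ) :
    (∑ s ∈ Finset.Icc 1 n, HF k (2 * s - 1) = (1 / k) • (HF k (2 * n) - HF k 0)) ∧
    (∑ s ∈ Finset.Icc 1 n, HF k (2 * s) = (1 / k) • (HF k (2 * n + 1) - HF k 1)) := by
  have hsum := sum_range_two_mul_add_one hk.ne' (HF_add_two k)
  rw [sum_Icc_one_eq_sum_range, sum_Icc_one_eq_sum_range, one_div]
  constructor
  · simpa [mul_add] using hsum 0 n
  · simpa [mul_add, add_comm 1, add_assoc] using hsum 1 n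

theorem sum_HF_odd_even (k : ℝ) (hk : 0 < k) (n : ℕ) (hn : 1 ≤ n) :
    (∑ s ∈ Finset.Icc 1 n, HF k (2 * s - 1) = (1 / k) • (HF k (2 * n) - HF k 0)) ∧
    (∑ s ∈ Finset.Icc 1 n, HF k (2 * s) = (1 / k) • (HF k (2 * n + 1) - HF k 1)) :=
  sum_HF_odd_even_general k hk n
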